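/- arXiv:2006.06547 — 2 statements merged into one kernel-verified Lean document; each statement's English description precedes it below -/
import Mathlib

section
/- If a state s can reach state s' with probability 1 in k₁ steps, s' can reach s in k₂ steps, all rewards lie in [0,1], and 0 ≤ γ < 1, then |V*(s) − V*(s')| ≤ (1 − γ^max(k₁,k₂))/(1 − γ). -/
open scoped BigOperators

/-- Trajectory of a deterministic MDP under policy (action sequence) `π` from state `s`. -/
def traj {S A : Type*} (T : S → A → S) (s : S) (π : ℕ → A) : ℕ → S
  | 0 => s
  | n + 1 => T (traj T s π n) (π n)

/-- Optimal (supremal) discounted value of state `s`. -/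
noncomputable def Vstar {S A : Type*} (T : S → A → S) (R : S → ℝ) (γ : ℝ) (s : S) : ℝ :=
  ⨆ π : ℕ → A, ∑' t : ℕ, γ ^ t * R (traj T s π t)

/-- `s` can reach `s'` in exactly `k` steps. -/
def Reaches {S A : Type*} (T : S → A → S) (s s' : S) (k : ℕ) : Prop :=
  ∃ π : ℕ → A, traj T s π k = s'

section Aux

variable {S A : Type*} (T : S → A → S) (R : S → ℝ) (γ : ℝ)

lemma traj_congr (s : S) (π π' : ℕ → A) (n : ℕ) (h : ∀ m < n, π m = π' m) :
    traj T s π n = traj T s π' n := by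
  induction n with
  | zero => rfl
  | succ n ih =>
    simp only [traj, ih (fun m hm => h m (Nat.lt_succ_of_lt hm)), h n (Nat.lt_succ_self n)]

lemma traj_add (s : S) (π : ℕ → A) (k t : ℕ) :
    traj T s π (k + t) = traj T (traj T s π k) (fun m => π (k + m)) t := by
  induction t with
  | zero => rfl
  | succ t ih => rw [Nat.add_succ]; simp only [traj, ih]

variable (hγ0 : 0 ≤ γ) (hγ1 : γ < 1) (hR : ∀ s, R s ∈ Set.Icc (0 : ℝ) 1)
include hγ0 hγ1 hR

lemma val_summable (s : S) (π : ℕ → A) :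
    Summable (fun t : ℕ => γ ^ t * R (traj T s π t)) := by
  refine Summable.of_nonneg_of_le (fun t => ?_) (fun t => ?_)
    (summable_geometric_of_lt_one hγ0 hγ1)
  · exact mul_nonneg (pow_nonneg hγ0 t) (hR _).1
  · calc γ ^ t * R (traj T s π t) ≤ γ ^ t * 1 :=
        mul_le_mul_of_nonneg_left (hR _).2 (pow_nonneg hγ0 t)
      _ = γ ^ t := mul_one _

lemma val_nonneg (s : S) (π : ℕ → A) :
    0 ≤ ∑' t : ℕ, γ ^ t * R (traj T s π t) :=
  tsum_nonneg (fun t => mul_nonneg (pow_nonneg hγ0 t) (hR _).1)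

lemma val_le (s : S) (π : ℕ → A) :
    ∑' t : ℕ, γ ^ t * R (traj T s π t) ≤ (1 - γ)⁻¹ := by
  calc ∑' t : ℕ, γ ^ t * R (traj T s π t) ≤ ∑' t : ℕ, γ ^ t := by
        refine Summable.tsum_le_tsum (fun t => ?_) (val_summable T R γ hγ0 hγ1 hR s π)
          (summable_geometric_of_lt_one hγ0 hγ1)
        calc γ ^ t * R (traj T s π t) ≤ γ ^ t * 1 :=
            mul_le_mul_of_nonneg_left (hR _).2 (pow_nonneg hγ0 t)
          _ = γ ^ t := mul_one _
    _ = (1 - γ)⁻¹ := tsum_geometric_of_lt_one hγ0 hγ1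

lemma val_bddAbove (s : S) :
    BddAbove (Set.range fun π : ℕ → A => ∑' t : ℕ, γ ^ t * R (traj T s π t)) := by
  refine ⟨(1 - γ)⁻¹, ?_⟩
  rintro x ⟨π, rfl⟩
  exact val_le T R γ hγ0 hγ1 hR s π

lemma Vstar_nonneg [Nonempty A] (s : S) : 0 ≤ Vstar T R γ s := by
  have π : ℕ → A := fun _ => Classical.arbitrary A
  exact le_trans (val_nonneg T R γ hγ0 hγ1 hR s π)
    (le_ciSup (val_bddAbove T R γ hγ0 hγ1 hR s) π)

lemma Vstar_le [Nonempty A] (s : S) : Vstar T R γ s ≤ (1 - γ)⁻¹ :=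
  Real.iSup_le (fun π => val_le T R γ hγ0 hγ1 hR s π) (inv_nonneg.mpr (by linarith))

lemma Vstar_reach [Nonempty A] (s s' : S) (k : ℕ) (h : Reaches T s s' k) :
    γ ^ k * Vstar T R γ s' ≤ Vstar T R γ s := by
  obtain ⟨π₀, hπ₀⟩ := h
  rcases eq_or_lt_of_le (pow_nonneg hγ0 k) with hk | hk
  · rw [← hk, zero_mul]; exact Vstar_nonneg T R γ hγ0 hγ1 hR s
  have key : ∀ π : ℕ → A,
      γ ^ k * ∑' t : ℕ, γ ^ t * R (traj T s' π t) ≤ Vstar T R γ s := by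
    intro π
    set π' : ℕ → A := fun n => if n < k then π₀ n else π (n - k) with hπ'
    have hfront : traj T s π' k = s' := by
      rw [traj_congr T s π' π₀ k (fun m hm => by simp [hπ', hm])]; exact hπ₀
    have hshift : ∀ t, traj T s π' (k + t) = traj T s' π t := by
      intro t
      rw [traj_add, hfront]
      refine traj_congr T s' _ π t (fun m _ => ?_)
      simp [hπ']
    have hsum := Summable.sum_add_tsum_nat_add k (val_summable T R γ hγ0 hγ1 hR s π')
    have htail : ∑' t : ℕ, γ ^ (t + k) * R (traj T s π' (t + k))
        = γ ^ k * ∑' t : ℕ, γ ^ t * R (traj T s' π t) := by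
      rw [← tsum_mul_left]
      congr 1; funext t
      rw [Nat.add_comm t k, hshift t, pow_add]; ring
    have hfin : 0 ≤ ∑ i ∈ Finset.range k, γ ^ i * R (traj T s π' i) :=
      Finset.sum_nonneg (fun i _ => mul_nonneg (pow_nonneg hγ0 i) (hR _).1)
    have : γ ^ k * ∑' t : ℕ, γ ^ t * R (traj T s' π t)
        ≤ ∑' t : ℕ, γ ^ t * R (traj T s π' t) := by
      rw [← hsum, ← htail]; linarith
    exact this.trans (le_ciSup (val_bddAbove T R γ hγ0 hγ1 hR s) π')
  calc γ ^ k * Vstar T R γ s' ≤ γ ^ k * (Vstar T R γ s / γ ^ k) := by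
        refine mul_le_mul_of_nonneg_left ?_ (le_of_lt hk)
        refine Real.iSup_le (fun π => ?_) ?_
        · rw [le_div_iff₀ hk, mul_comm]; exact key π
        · rw [le_div_iff₀ hk, zero_mul]; exact Vstar_nonneg T R γ hγ0 hγ1 hR s
    _ = Vstar T R γ s := mul_div_cancel₀ _ (ne_of_gt hk)

end Aux

theorem stmt_0 {S A : Type*} [Nonempty A] (T : S → A → S) (R : S → ℝ) (γ : ℝ)
    (hγ0 : 0 ≤ γ) (hγ1 : γ < 1) (hR : ∀ s, R s ∈ Set.Icc (0 : ℝ) 1)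
    (s s' : S) (k₁ k₂ : ℕ)
    (h1 : Reaches T s s' k₁) (h2 : Reaches T s' s k₂) :
    |Vstar T R γ s - Vstar T R γ s'| ≤ (1 - γ ^ max k₁ k₂) / (1 - γ) := by
  have h1γ : (0:ℝ) < 1 - γ := by linarith
  have hVs := Vstar_le T R γ hγ0 hγ1 hR s
  have hVs' := Vstar_le T R γ hγ0 hγ1 hR s'
  have hVs0 := Vstar_nonneg T R γ hγ0 hγ1 hR s
  have hVs'0 := Vstar_nonneg T R γ hγ0 hγ1 hR s'
  have hr1 := Vstar_reach T R γ hγ0 hγ1 hR s s' k₁ h1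
  have hr2 := Vstar_reach T R γ hγ0 hγ1 hR s' s k₂ h2
  have hm1 : γ ^ max k₁ k₂ ≤ γ ^ k₁ :=
    pow_le_pow_of_le_one hγ0 (le_of_lt hγ1) (le_max_left _ _)
  have hm2 : γ ^ max k₁ k₂ ≤ γ ^ k₂ :=
    pow_le_pow_of_le_one hγ0 (le_of_lt hγ1) (le_max_right _ _)
  have key : ∀ x y : ℝ, 0 ≤ x → x ≤ (1-γ)⁻¹ → ∀ c : ℝ, γ ^ max k₁ k₂ ≤ c →
      c * x ≤ y → x - y ≤ (1 - γ ^ max k₁ k₂) / (1 - γ) := by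
    intro x y hx hxle c hc hcy
    have : x - y ≤ (1 - c) * x := by nlinarith
    calc x - y ≤ (1 - c) * x := this
      _ ≤ (1 - γ ^ max k₁ k₂) * (1 - γ)⁻¹ := by
          have hpow : (0:ℝ) ≤ γ ^ max k₁ k₂ := pow_nonneg hγ0 _
          have hpow1 : γ ^ max k₁ k₂ ≤ 1 := pow_le_one₀ hγ0 (le_of_lt hγ1)
          nlinarith
      _ = (1 - γ ^ max k₁ k₂) / (1 - γ) := by rw [div_eq_mul_inv]
  rw [abs_sub_le_iff]
  constructor
  · exact key _ _ hVs0 hVs (γ ^ k₂) hm2 hr2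
  · exact key _ _ hVs'0 hVs' (γ ^ k₁) hm1 hr1
end

section
/- In a deterministic MDP where every state can reach every other state in at most k steps (k-communicating), the optimal value function for any reward in [0,1]^S has oscillation at most (1 − γ^k)/(1 − γ): sup_s V*(s) − inf_s V*(s) ≤ (1 − γ^k)/(1 − γ). -/
open scoped BigOperators

/-!
If `s'` reaches `s` in `k` steps, then from `s'` one can walk to `s` (collecting reward `≥ 0`)
and then follow any policy from `s`, so `V*(s') ≥ γ^k V*(s)`. Hence
`V*(s) - V*(s') ≤ (1 - γ^k) V*(s) ≤ (1 - γ^k) / (1 - γ)`, since rewards in `[0, 1]` give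
`V* ≤ 1 / (1 - γ)`.
-/

section Geometric

variable {γ : ℝ} {r : ℕ → ℝ}

lemma summable_pow_mul_of_mem_Icc (hγ0 : 0 ≤ γ) (hγ1 : γ < 1) (hr : ∀ t, r t ∈ Set.Icc 0 1) :
    Summable fun t => γ ^ t * r t :=
  (summable_geometric_of_lt_one hγ0 hγ1).of_nonneg_of_le
    (fun t => mul_nonneg (pow_nonneg hγ0 t) (hr t).1)
    (fun t => mul_le_of_le_one_right (pow_nonneg hγ0 t) (hr t).2)

lemma tsum_pow_mul_le_of_mem_Icc (hγ0 : 0 ≤ γ) (hγ1 : γ < 1) (hr : ∀ t, r t ∈ Set.Icc 0 1) :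
    ∑' t, γ ^ t * r t ≤ (1 - γ)⁻¹ := by
  rw [← tsum_geometric_of_lt_one hγ0 hγ1]
  exact (summable_pow_mul_of_mem_Icc hγ0 hγ1 hr).tsum_le_tsum
    (fun t => mul_le_of_le_one_right (pow_nonneg hγ0 t) (hr t).2)
    (summable_geometric_of_lt_one hγ0 hγ1)

lemma pow_mul_tsum_shift_le (hγ0 : 0 ≤ γ) (hγ1 : γ < 1) (hr : ∀ t, r t ∈ Set.Icc 0 1) (k : ℕ) :
    γ ^ k * ∑' n, γ ^ n * r (n + k) ≤ ∑' t, γ ^ t * r t := by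
  rw [← tsum_mul_left]
  have hshift : (fun n => γ ^ k * (γ ^ n * r (n + k))) = (fun t => γ ^ t * r t) ∘ (· + k) := by
    ext n
    simp only [Function.comp_apply, pow_add]
    ring
  rw [hshift]
  exact tsum_comp_le_tsum_of_inj (summable_pow_mul_of_mem_Icc hγ0 hγ1 hr)
    (fun t => mul_nonneg (pow_nonneg hγ0 t) (hr t).1) (add_left_injective k)

end Geometric

section Trajectory

variable {S A : Type*} (T : S → A → S)

def policyAppend (σ : ℕ → A) (k : ℕ) (π : ℕ → A) : ℕ → A :=
  fun n => if n < k then σ n else π (n - k)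

lemma traj_policyAppend_of_le (s : S) (σ π : ℕ → A) {k m : ℕ} (hm : m ≤ k) :
    traj T s (policyAppend σ k π) m = traj T s σ m := by
  induction m with
  | zero => rfl
  | succ m ih =>
    have hmk : m < k := hm
    simp only [traj, ih hmk.le, policyAppend, hmk, if_true]

lemma traj_policyAppend_add (s : S) (σ π : ℕ → A) (k n : ℕ) :
    traj T s (policyAppend σ k π) (n + k) = traj T (traj T s σ k) π n := by
  induction n with
  | zero => rw [Nat.zero_add]; exact traj_policyAppend_of_le T s σ π le_rfl
  | succ n ih =>
    rw [Nat.add_right_comm, traj, ih, policyAppend, if_neg (by omega), Nat.add_sub_cancel, traj]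

end Trajectory

section Value

variable {S A : Type*} (T : S → A → S) {R : S → ℝ} {γ : ℝ}

lemma bddAbove_range_tsum_traj (hγ0 : 0 ≤ γ) (hγ1 : γ < 1) (hR : ∀ s, R s ∈ Set.Icc 0 1)
    (s : S) : BddAbove (Set.range fun π : ℕ → A => ∑' t, γ ^ t * R (traj T s π t)) :=
  ⟨(1 - γ)⁻¹, by
    rintro _ ⟨π, rfl⟩
    exact tsum_pow_mul_le_of_mem_Icc hγ0 hγ1 fun _ => hR _⟩

lemma Vstar_le_inv_one_sub (hγ0 : 0 ≤ γ) (hγ1 : γ < 1) (hR : ∀ s, R s ∈ Set.Icc 0 1)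
    (s : S) : Vstar T R γ s ≤ (1 - γ)⁻¹ :=
  Real.iSup_le (fun _ => tsum_pow_mul_le_of_mem_Icc hγ0 hγ1 fun _ => hR _)
    (inv_nonneg.mpr (sub_nonneg.mpr hγ1.le))

lemma Reaches.pow_mul_Vstar_le (hγ0 : 0 ≤ γ) (hγ1 : γ < 1) (hR : ∀ s, R s ∈ Set.Icc 0 1)
    {s s' : S} {k : ℕ} (h : Reaches T s s' k) : γ ^ k * Vstar T R γ s' ≤ Vstar T R γ s := by
  obtain ⟨σ, hσ⟩ := h
  have : Nonempty (ℕ → A) := ⟨σ⟩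
  rw [Vstar, Real.mul_iSup_of_nonneg (pow_nonneg hγ0 k)]
  refine ciSup_le fun π => ?_
  have hshift : ∀ n, traj T s (policyAppend σ k π) (n + k) = traj T s' π n := fun n => by
    rw [traj_policyAppend_add, hσ]
  calc γ ^ k * ∑' n, γ ^ n * R (traj T s' π n)
      = γ ^ k * ∑' n, γ ^ n * R (traj T s (policyAppend σ k π) (n + k)) := by
        simp only [hshift]
    _ ≤ ∑' t, γ ^ t * R (traj T s (policyAppend σ k π) t) :=
        pow_mul_tsum_shift_le hγ0 hγ1 (fun _ => hR _) k
    _ ≤ Vstar T R γ s := le_ciSup (bddAbove_range_tsum_traj T hγ0 hγ1 hR s) _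

lemma Reaches.Vstar_sub_Vstar_le (hγ0 : 0 ≤ γ) (hγ1 : γ < 1)
    (hR : ∀ s, R s ∈ Set.Icc 0 1) {s s' : S} {k : ℕ} (h : Reaches T s' s k) :
    Vstar T R γ s - Vstar T R γ s' ≤ (1 - γ ^ k) / (1 - γ) := by
  have hreach := h.pow_mul_Vstar_le T hγ0 hγ1 hR
  have hle := Vstar_le_inv_one_sub T hγ0 hγ1 hR s
  have hγk : γ ^ k ≤ 1 := pow_le_one₀ hγ0 hγ1.le
  calc Vstar T R γ s - Vstar T R γ s' ≤ (1 - γ ^ k) * Vstar T R γ s := by linarith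
    _ ≤ (1 - γ ^ k) * (1 - γ)⁻¹ := mul_le_mul_of_nonneg_left hle (by linarith)
    _ = (1 - γ ^ k) / (1 - γ) := (div_eq_mul_inv _ _).symm

end Value

theorem stmt_16_general {S A : Type*} [Nonempty S]
    (T : S → A → S) (R : S → ℝ) (γ : ℝ) (hγ0 : 0 ≤ γ) (hγ1 : γ < 1)
    (hR : ∀ s, R s ∈ Set.Icc (0 : ℝ) 1) (k : ℕ)
    (hcomm : ∀ s s' : S, Reaches T s s' k) :
    (⨆ s : S, Vstar T R γ s) - ⨅ s : S, Vstar T R γ s ≤ (1 - γ ^ k) / (1 - γ) := by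
  rw [sub_le_iff_le_add]
  refine ciSup_le fun s => ?_
  rw [← sub_le_iff_le_add']
  refine le_ciInf fun s' => ?_
  have := (hcomm s' s).Vstar_sub_Vstar_le T hγ0 hγ1 hR
  linarith

theorem stmt_16 {S A : Type*} [Fintype S] [Nonempty S] [Fintype A] [Nonempty A]
    (T : S → A → S) (R : S → ℝ) (γ : ℝ) (hγ0 : 0 ≤ γ) (hγ1 : γ < 1)
    (hR : ∀ s, R s ∈ Set.Icc (0 : ℝ) 1) (k : ℕ)
    (hcomm : ∀ s s' : S, Reaches T s s' k) :
    (⨆ s : S, Vstar T R γ s) - ⨅ s : S, Vstar T R γ s ≤ (1 - γ ^ k) / (1 - γ) :=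
  stmt_16_general T R γ hγ0 hγ1 hR k hcomm
end
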